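/- For nonnegative integers N and indeterminates a, q: ∑_{j≥0} q^{3·binom(N-2j,2)} C(N,2j)_{q^3} (-a q^4; q^6)_j (q^3; q^6)_j = ∑_{j≥0} a^j q^{3j^2+j} C(N,2j)_{q^3} (q^3; q^6)_j, where binom(m,2) = m(m-1)/2 and both sums are finite (terms vanish for 2j > N). -/

import Mathlib

open Finset

/-- q-Pochhammer symbol (a;q)_n. -/
noncomputable def qPoch {K : Type*} [Field K] (q a : K) (n : ℕ) : K :=
  ∏ j ∈ Finset.range n, (1 - a * q ^ j)

/-- Gaussian (q-)binomial coefficient. -/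
noncomputable def qbinom {K : Type*} [Field K] (q : K) (n k : ℕ) : K :=
  if k ≤ n then qPoch q q n / (qPoch q q k * qPoch q q (n - k)) else 0

/-!
Expand `(-t; Q²)_j` by the finite q-binomial theorem and exchange the two sums. Using
`(Q; Q²)_j C(j, k)_{Q²} = C(2j, 2k)_Q (Q; Q²)_k (Q; Q²)_{j-k}` and
`C(N, 2j) C(2j, 2k) = C(N, 2k) C(N - 2k, 2j - 2k)`, the coefficient of `t^k Q^{k(k-1)}` becomes
`C(N, 2k)_Q (Q; Q²)_k` times the `t = 0` case of the identity for `M = N - 2k`, namely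
`∑_i Q^{binom(M - 2i, 2)} C(M, 2i)_Q (Q; Q²)_i = 1`. That sum satisfies
`F(M + 2) = Q^{M+1} F(M + 1) + (1 - Q^{M+1}) F(M)`, so it is identically `1`.
The corollary is the case `Q = q³`, `t = a q⁴`.
-/

lemma Nat.choose_two_succ (k : ℕ) : (k + 1).choose 2 = k.choose 2 + k := by
  rw [Nat.choose_succ_succ', Nat.choose_one_right, add_comm]

section
variable {K : Type*} [Field K] (Q : K)

lemma qPoch_zero (a : K) : qPoch Q a 0 = 1 := by simp [qPoch]

lemma qPoch_succ (a : K) (n : ℕ) : qPoch Q a (n + 1) = qPoch Q a n * (1 - a * Q ^ n) := by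
  simp [qPoch, prod_range_succ]

lemma qPoch_self_succ (n : ℕ) : qPoch Q Q (n + 1) = qPoch Q Q n * (1 - Q ^ (n + 1)) := by
  rw [qPoch_succ, pow_succ']

lemma qPoch_sq_self_succ (n : ℕ) :
    qPoch (Q ^ 2) Q (n + 1) = qPoch (Q ^ 2) Q n * (1 - Q ^ (2 * n + 1)) := by
  rw [qPoch_succ, ← pow_mul, ← pow_succ']

lemma qPoch_self_two_mul (n : ℕ) :
    qPoch Q Q (2 * n) = qPoch (Q ^ 2) Q n * qPoch (Q ^ 2) (Q ^ 2) n := by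
  induction n with
  | zero => simp [qPoch_zero]
  | succ n ih =>
    rw [mul_add_one, qPoch_self_succ, qPoch_self_succ, ih, qPoch_sq_self_succ,
      qPoch_self_succ, ← pow_mul, add_assoc]
    ring

lemma qbinom_of_le {n k : ℕ} (h : k ≤ n) :
    qbinom Q n k = qPoch Q Q n / (qPoch Q Q k * qPoch Q Q (n - k)) := if_pos h

lemma qbinom_of_lt {n k : ℕ} (h : n < k) : qbinom Q n k = 0 := if_neg (by omega)

variable {Q} (hQ : ¬IsOfFinOrder Q)
include hQ

lemma one_sub_pow_ne_zero {m : ℕ} (hm : m ≠ 0) : 1 - Q ^ m ≠ 0 := fun h ↦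
  hQ (isOfFinOrder_iff_pow_eq_one.2 ⟨m, Nat.pos_of_ne_zero hm, (sub_eq_zero.1 h).symm⟩)

lemma qPoch_pow_pow_ne_zero (s : ℕ) {r : ℕ} (hr : r ≠ 0) (n : ℕ) :
    qPoch (Q ^ s) (Q ^ r) n ≠ 0 :=
  prod_ne_zero_iff.2 fun j _ ↦ by
    rw [← pow_mul, ← pow_add]
    exact one_sub_pow_ne_zero hQ (by omega)

lemma qPoch_self_ne_zero (n : ℕ) : qPoch Q Q n ≠ 0 := by
  simpa using qPoch_pow_pow_ne_zero hQ 1 one_ne_zero n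

lemma qPoch_sq_self_ne_zero (n : ℕ) : qPoch (Q ^ 2) Q n ≠ 0 := by
  simpa using qPoch_pow_pow_ne_zero hQ 2 one_ne_zero n

lemma qbinom_zero_right (n : ℕ) : qbinom Q n 0 = 1 := by
  rw [qbinom_of_le Q n.zero_le, qPoch_zero, one_mul, Nat.sub_zero,
    div_self (qPoch_self_ne_zero hQ n)]

lemma one_sub_pow_mul_qbinom_succ_succ (n k : ℕ) :
    (1 - Q ^ (k + 1)) * qbinom Q (n + 1) (k + 1) = (1 - Q ^ (n + 1)) * qbinom Q n k := by
  rcases le_or_gt k n with h | h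
  · rw [qbinom_of_le Q (by omega : k + 1 ≤ n + 1), qbinom_of_le Q h, Nat.add_sub_add_right,
      qPoch_self_succ, qPoch_self_succ]
    have := qPoch_self_ne_zero hQ k
    have := qPoch_self_ne_zero hQ (n - k)
    have := one_sub_pow_ne_zero hQ k.add_one_ne_zero
    field_simp
  · rw [qbinom_of_lt Q (by omega), qbinom_of_lt Q h, mul_zero, mul_zero]

lemma one_sub_pow_mul_qbinom_succ (n k : ℕ) :
    (1 - Q ^ (k + 1)) * qbinom Q n (k + 1) = (1 - Q ^ (n - k)) * qbinom Q n k := by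
  rcases lt_trichotomy k n with h | rfl | h
  · obtain ⟨m, rfl⟩ := Nat.exists_eq_add_of_lt h
    rw [qbinom_of_le Q (by omega : k + 1 ≤ k + m + 1), qbinom_of_le Q h.le,
      show k + m + 1 - k = m + 1 by omega, show k + m + 1 - (k + 1) = m by omega,
      qPoch_self_succ Q k, qPoch_self_succ Q m]
    have := qPoch_self_ne_zero hQ k
    have := qPoch_self_ne_zero hQ m
    have := one_sub_pow_ne_zero hQ k.add_one_ne_zero
    have := one_sub_pow_ne_zero hQ m.add_one_ne_zero
    field_simp
  · simp [qbinom_of_lt Q k.lt_succ_self]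
  · rw [qbinom_of_lt Q (by omega), qbinom_of_lt Q h, mul_zero, mul_zero]

lemma qbinom_succ_succ (n k : ℕ) :
    qbinom Q (n + 1) (k + 1) = qbinom Q n (k + 1) + Q ^ (n - k) * qbinom Q n k := by
  apply mul_left_cancel₀ (one_sub_pow_ne_zero hQ k.add_one_ne_zero)
  rcases le_or_gt k n with h | h
  · have hpow : Q ^ (n - k) * Q ^ (k + 1) = Q ^ (n + 1) := by rw [← pow_add]; congr 1; omega
    linear_combination one_sub_pow_mul_qbinom_succ_succ hQ n k
      - one_sub_pow_mul_qbinom_succ hQ n k + qbinom Q n k * hpow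
  · simp [qbinom_of_lt Q h, qbinom_of_lt Q (by omega : n < k + 1),
      qbinom_of_lt Q (by omega : n + 1 < k + 1)]

lemma qbinom_succ_succ' (n k : ℕ) :
    qbinom Q (n + 1) (k + 1) = Q ^ (k + 1) * qbinom Q n (k + 1) + qbinom Q n k := by
  apply mul_left_cancel₀ (one_sub_pow_ne_zero hQ k.add_one_ne_zero)
  rcases le_or_gt k n with h | h
  · have hpow : Q ^ (n - k) * Q ^ (k + 1) = Q ^ (n + 1) := by rw [← pow_add]; congr 1; omega
    linear_combination one_sub_pow_mul_qbinom_succ_succ hQ n k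
      - Q ^ (k + 1) * one_sub_pow_mul_qbinom_succ hQ n k + qbinom Q n k * hpow
  · simp [qbinom_of_lt Q h, qbinom_of_lt Q (by omega : n < k + 1),
      qbinom_of_lt Q (by omega : n + 1 < k + 1)]

lemma qPoch_neg_eq_sum (t : K) {n m : ℕ} (h : n < m) :
    qPoch Q (-t) n = ∑ k ∈ range m, Q ^ k.choose 2 * qbinom Q n k * t ^ k := by
  induction n generalizing m with
  | zero =>
    obtain ⟨m, rfl⟩ := Nat.exists_eq_add_of_lt h
    rw [sum_range_succ', sum_eq_zero fun k _ ↦ by rw [qbinom_of_lt Q (by omega)]; ring]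
    simp [qPoch_zero, qbinom_zero_right hQ]
  | succ n ih =>
    obtain ⟨m, rfl⟩ : ∃ m', m = m' + 1 := ⟨m - 1, by omega⟩
    have hterm : ∀ k ∈ range m, Q ^ (k + 1).choose 2 * qbinom Q (n + 1) (k + 1) * t ^ (k + 1) =
        Q ^ (k + 1).choose 2 * qbinom Q n (k + 1) * t ^ (k + 1) +
          t * Q ^ n * (Q ^ k.choose 2 * qbinom Q n k * t ^ k) := by
      intro k _
      rcases le_or_gt k n with hk | hk
      · have hpow : Q ^ (k + 1).choose 2 * Q ^ (n - k) = Q ^ k.choose 2 * Q ^ n := by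
          rw [← pow_add, ← pow_add, Nat.choose_two_succ]
          congr 1
          omega
        rw [qbinom_succ_succ hQ]
        linear_combination qbinom Q n k * t ^ (k + 1) * hpow
      · simp [qbinom_of_lt Q hk, qbinom_of_lt Q (by omega : n < k + 1),
          qbinom_of_lt Q (by omega : n + 1 < k + 1)]
    have hm := ih (m := m) (by omega)
    have hm' := ih (m := m + 1) (by omega)
    rw [sum_range_succ'] at hm'
    rw [qPoch_succ, sum_range_succ', sum_congr rfl hterm, sum_add_distrib, ← mul_sum]
    simp only [qbinom_zero_right hQ, Nat.choose_zero_succ, pow_zero, mul_one] at hm' ⊢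
    linear_combination hm' + t * Q ^ n * hm

lemma qPoch_sq_self_mul_qbinom_sq (j k : ℕ) :
    qPoch (Q ^ 2) Q j * qbinom (Q ^ 2) j k =
      qbinom Q (2 * j) (2 * k) * qPoch (Q ^ 2) Q k * qPoch (Q ^ 2) Q (j - k) := by
  rcases le_or_gt k j with h | h
  · rw [qbinom_of_le _ h, qbinom_of_le Q (by omega), ← Nat.mul_sub, qPoch_self_two_mul,
      qPoch_self_two_mul, qPoch_self_two_mul]
    have := qPoch_pow_pow_ne_zero hQ 2 two_ne_zero j
    have := qPoch_pow_pow_ne_zero hQ 2 two_ne_zero k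
    have := qPoch_pow_pow_ne_zero hQ 2 two_ne_zero (j - k)
    have := qPoch_sq_self_ne_zero hQ k
    have := qPoch_sq_self_ne_zero hQ (j - k)
    field_simp
  · rw [qbinom_of_lt _ h, qbinom_of_lt Q (by omega)]
    ring

lemma qbinom_mul_qbinom (n m l : ℕ) (hlm : l ≤ m) :
    qbinom Q n m * qbinom Q m l = qbinom Q n l * qbinom Q (n - l) (m - l) := by
  rcases le_or_gt m n with h | h
  · rw [qbinom_of_le Q h, qbinom_of_le Q hlm, qbinom_of_le Q (hlm.trans h),
      qbinom_of_le Q (by omega : m - l ≤ n - l), show n - l - (m - l) = n - m by omega]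
    have := qPoch_self_ne_zero hQ l
    have := qPoch_self_ne_zero hQ m
    have := qPoch_self_ne_zero hQ (m - l)
    have := qPoch_self_ne_zero hQ (n - l)
    have := qPoch_self_ne_zero hQ (n - m)
    field_simp
  · rw [qbinom_of_lt Q h, zero_mul]
    rcases le_or_gt l n with h' | h'
    · rw [qbinom_of_lt Q (by omega : n - l < m - l), mul_zero]
    · rw [qbinom_of_lt Q h', zero_mul]

lemma qbinom_two_mul_recurrence (M i : ℕ) :
    Q ^ (M + 2 - 2 * (i + 1)).choose 2 * qbinom Q (M + 2) (2 * (i + 1)) * qPoch (Q ^ 2) Q (i + 1) =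
      Q ^ (M + 1) * (Q ^ (M + 1 - 2 * (i + 1)).choose 2 * qbinom Q (M + 1) (2 * (i + 1)) *
          qPoch (Q ^ 2) Q (i + 1)) +
        (1 - Q ^ (M + 1)) *
          (Q ^ (M - 2 * i).choose 2 * qbinom Q M (2 * i) * qPoch (Q ^ 2) Q i) := by
  have hpow : Q ^ (M - 2 * i).choose 2 * Q ^ (2 * (i + 1)) * qbinom Q (M + 1) (2 * (i + 1)) =
      Q ^ (M + 1) * Q ^ (M + 1 - 2 * (i + 1)).choose 2 * qbinom Q (M + 1) (2 * (i + 1)) := by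
    rcases le_or_gt (2 * (i + 1)) (M + 1) with h | h
    · rw [← pow_add, ← pow_add, show M - 2 * i = M + 1 - 2 * (i + 1) + 1 by omega,
        Nat.choose_two_succ]
      congr 2
      omega
    · simp [qbinom_of_lt Q h]
  rw [show M + 2 - 2 * (i + 1) = M - 2 * i by omega, show 2 * (i + 1) = 2 * i + 1 + 1 by ring,
    qbinom_succ_succ' hQ]
  rw [show 2 * i + 1 + 1 = 2 * (i + 1) by ring]
  linear_combination qPoch (Q ^ 2) Q (i + 1) * hpow +
    Q ^ (M - 2 * i).choose 2 * qPoch (Q ^ 2) Q i * one_sub_pow_mul_qbinom_succ_succ hQ M (2 * i) +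
    Q ^ (M - 2 * i).choose 2 * qbinom Q (M + 1) (2 * i + 1) * qPoch_sq_self_succ Q i

lemma sum_qbinom_two_mul_mul_qPoch_eq_one {M n : ℕ} (h : M < n) :
    ∑ i ∈ range n, Q ^ (M - 2 * i).choose 2 * qbinom Q M (2 * i) * qPoch (Q ^ 2) Q i = 1 := by
  obtain ⟨n, rfl⟩ : ∃ n', n = n' + 1 := ⟨n - 1, by omega⟩
  induction M using Nat.twoStepInduction generalizing n with
  | zero | one =>
    rw [sum_range_succ', sum_eq_zero fun i _ ↦ by rw [qbinom_of_lt Q (by omega)]; ring]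
    simp [qbinom_zero_right hQ, qPoch_zero]
  | more M ih₀ ih₁ =>
    have h₀ := ih₀ (n := n - 1) (by omega)
    have h₁ := ih₁ (n := n) (by omega)
    rw [show n - 1 + 1 = n by omega] at h₀
    rw [sum_range_succ'] at h₁ ⊢
    rw [sum_congr rfl fun i _ ↦ qbinom_two_mul_recurrence hQ M i, sum_add_distrib, ← mul_sum,
      ← mul_sum]
    have hboundary : Q ^ (M + 2).choose 2 = Q ^ (M + 1) * Q ^ (M + 1).choose 2 := by
      rw [show (M + 2).choose 2 = (M + 1).choose 2 + (M + 1) from Nat.choose_two_succ (M + 1),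
        pow_add, mul_comm]
    simp only [mul_zero, Nat.sub_zero, qbinom_zero_right hQ, qPoch_zero, mul_one] at h₁ ⊢
    linear_combination Q ^ (M + 1) * h₁ + (1 - Q ^ (M + 1)) * h₀ + hboundary

lemma sum_qbinom_two_mul_mul_qbinom_sq {N k : ℕ} (hk : k ≤ N) :
    ∑ j ∈ range (N + 1), Q ^ (N - 2 * j).choose 2 * qbinom Q N (2 * j) * qPoch (Q ^ 2) Q j *
        qbinom (Q ^ 2) j k = qbinom Q N (2 * k) * qPoch (Q ^ 2) Q k := by
  have hterm : ∀ i ∈ range (N + 1 - k), Q ^ (N - 2 * (k + i)).choose 2 *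
      qbinom Q N (2 * (k + i)) * qPoch (Q ^ 2) Q (k + i) * qbinom (Q ^ 2) (k + i) k =
      qbinom Q N (2 * k) * qPoch (Q ^ 2) Q k *
        (Q ^ (N - 2 * k - 2 * i).choose 2 * qbinom Q (N - 2 * k) (2 * i) * qPoch (Q ^ 2) Q i) := by
    intro i _
    have hfactor := qPoch_sq_self_mul_qbinom_sq hQ (k + i) k
    have hprod := qbinom_mul_qbinom hQ N (2 * (k + i)) (2 * k) (by omega)
    rw [Nat.add_sub_cancel_left] at hfactor
    rw [show 2 * (k + i) - 2 * k = 2 * i by omega] at hprod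
    rw [show N - 2 * (k + i) = N - 2 * k - 2 * i by omega]
    linear_combination Q ^ (N - 2 * k - 2 * i).choose 2 *
      (qbinom Q N (2 * (k + i)) * hfactor + qPoch (Q ^ 2) Q k * qPoch (Q ^ 2) Q i * hprod)
  rw [show N + 1 = k + (N + 1 - k) by omega, sum_range_add,
    sum_eq_zero fun j hj ↦ by rw [qbinom_of_lt _ (mem_range.1 hj)]; ring, zero_add,
    sum_congr rfl hterm, ← mul_sum, sum_qbinom_two_mul_mul_qPoch_eq_one hQ (by omega), mul_one]

theorem sum_qbinom_two_mul_mul_qPoch_neg (t : K) (N : ℕ) :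
    ∑ j ∈ range (N + 1), Q ^ (N - 2 * j).choose 2 * qbinom Q N (2 * j) *
        qPoch (Q ^ 2) (-t) j * qPoch (Q ^ 2) Q j =
      ∑ k ∈ range (N + 1), t ^ k * (Q ^ 2) ^ k.choose 2 * qbinom Q N (2 * k) *
        qPoch (Q ^ 2) Q k := by
  have hQ₂ : ¬IsOfFinOrder (Q ^ 2) := by simpa using hQ
  calc _ = ∑ j ∈ range (N + 1), ∑ k ∈ range (N + 1), t ^ k * (Q ^ 2) ^ k.choose 2 *
        (Q ^ (N - 2 * j).choose 2 * qbinom Q N (2 * j) * qPoch (Q ^ 2) Q j *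
          qbinom (Q ^ 2) j k) := sum_congr rfl fun j hj ↦ by
        rw [qPoch_neg_eq_sum hQ₂ t (mem_range.1 hj), mul_sum, sum_mul]
        exact sum_congr rfl fun k _ ↦ by ring
    _ = _ := by
      rw [sum_comm]
      exact sum_congr rfl fun k hk ↦ by
        rw [← mul_sum, sum_qbinom_two_mul_mul_qbinom_sq hQ (mem_range_succ_iff.1 hk)]
        ring

end

lemma MvPolynomial.not_isOfFinOrder_algebraMap_X {σ R : Type*} [CommRing R] [Nontrivial R]
    (i : σ) :
    ¬IsOfFinOrder (algebraMap (MvPolynomial σ R) (FractionRing (MvPolynomial σ R)) (X i)) := by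
  rw [isOfFinOrder_iff_pow_eq_one]
  rintro ⟨n, hn, h⟩
  rw [← map_pow, ← map_one (algebraMap (MvPolynomial σ R) _)] at h
  have := IsFractionRing.injective (MvPolynomial σ R) (FractionRing (MvPolynomial σ R)) h
  rw [X_pow_eq_monomial, one_def, monomial_left_inj one_ne_zero, Finsupp.single_eq_zero] at this
  omega

lemma four_mul_add_six_mul_choose_two (k : ℕ) : 4 * k + 6 * k.choose 2 = 3 * k ^ 2 + k := by
  induction k with
  | zero => rfl
  | succ k ih => rw [Nat.choose_two_succ]; linarith

theorem corollary_CO_general (N : ℕ) (a q : FractionRing (MvPolynomial (Fin 2) ℚ))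
    (hq : q = algebraMap (MvPolynomial (Fin 2) ℚ) _ (MvPolynomial.X 1)) :
    ∑ j ∈ Finset.range (N + 1),
        q ^ (3 * ((N - 2 * j) * (N - 2 * j - 1) / 2)) * qbinom (q ^ 3) N (2 * j) *
          qPoch (q ^ 6) (-(a * q ^ 4)) j * qPoch (q ^ 6) (q ^ 3) j =
      ∑ j ∈ Finset.range (N + 1),
        a ^ j * q ^ (3 * j ^ 2 + j) * qbinom (q ^ 3) N (2 * j) *
          qPoch (q ^ 6) (q ^ 3) j := by
  have hq₃ : ¬IsOfFinOrder (q ^ 3) := by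
    simpa [hq] using MvPolynomial.not_isOfFinOrder_algebraMap_X (R := ℚ) (1 : Fin 2)
  have key := sum_qbinom_two_mul_mul_qPoch_neg hq₃ (a * q ^ 4) N
  simp only [show q ^ 6 = (q ^ 3) ^ 2 by ring, ← Nat.choose_two_right, pow_mul q 3, key]
  refine sum_congr rfl fun k _ ↦ ?_
  rw [← four_mul_add_six_mul_choose_two]
  ring

/-- Corollary 14 of the paper, with a = X 0 and q = X 1 indeterminates. -/
theorem corollary_CO (N : ℕ) (a q : FractionRing (MvPolynomial (Fin 2) ℚ))
    (ha : a = algebraMap (MvPolynomial (Fin 2) ℚ) _ (MvPolynomial.X 0))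
    (hq : q = algebraMap (MvPolynomial (Fin 2) ℚ) _ (MvPolynomial.X 1)) :
    ∑ j ∈ Finset.range (N + 1),
        q ^ (3 * ((N - 2 * j) * (N - 2 * j - 1) / 2)) * qbinom (q ^ 3) N (2 * j) *
          qPoch (q ^ 6) (-(a * q ^ 4)) j * qPoch (q ^ 6) (q ^ 3) j =
      ∑ j ∈ Finset.range (N + 1),
        a ^ j * q ^ (3 * j ^ 2 + j) * qbinom (q ^ 3) N (2 * j) *
          qPoch (q ^ 6) (q ^ 3) j :=
  corollary_CO_general N a q hq
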